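/- Let n ≥ 2 be an integer and let x, x', y, y' ∈ ZMod n with Z := d(y', y). If d(x', y') + d(y', y) + d(y, x) ≥ d(x', x) + n (i.e., the cyclic order of the four points is not x', y', y, x), then 2·d(y, x) + 2·d(x', y') + f(x, x') ≥ ⌊n/2⌋·⌊(n−1)/2⌋ + n − 1 − 2Z + 2n. -/

import Mathlib

/-- `C2 x` is the binomial-type expression `x(x-1)/2`. -/
def C2 (x : ℤ) : ℤ := x * (x - 1) / 2

/-- `dz x y` is the least nonnegative residue of `y - x` modulo `n`. -/
def dz {n : ℕ} (x y : ZMod n) : ℕ := (y - x).val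

/-- `fz x y = C(d(x,y),2) + C(n - d(x,y),2)` for `x y : ZMod n`. -/
def fz {n : ℕ} (x y : ZMod n) : ℤ := C2 (dz x y) + C2 ((n : ℤ) - dz x y)

/-! The cyclic-order hypothesis gives `2 d(y,x) + 2 d(x',y') ≥ 2 d(x',x) + 2n - 2Z`, so it suffices
that `⌊n/2⌋⌊(n-1)/2⌋ + n - 1 ≤ 2 d(x',x) + f(x,x')`. With `m = d(x,x')`, the identity
`C(a+1,2) = C(a,2) + a` rewrites the right-hand side minus `n - 1` as `C(u,2) + C(v,2)` with
`u + v = n` (namely `u = 1` if `x = x'`, and `u = m - 1` otherwise), and `C(u,2) + C(v,2)` is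
minimised over `u + v = n` at the balanced split, where it equals `⌊n/2⌋⌊(n-1)/2⌋`. -/

lemma C2_add_one (x : ℤ) : C2 (x + 1) = C2 x + x := by
  unfold C2
  rw [show (x + 1) * (x + 1 - 1) = x * (x - 1) + x * 2 by ring,
    Int.add_mul_ediv_right _ _ two_ne_zero]

lemma two_mul_C2 (x : ℤ) : 2 * C2 x = x * (x - 1) := by
  unfold C2
  refine Int.two_mul_ediv_two_of_even ?_
  simpa [mul_comm] using Int.even_mul_pred_self x

lemma half_mul_half_pred_le_C2_add_C2 {n : ℕ} (hn : 0 < n) {u v : ℤ} (huv : u + v = n) :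
    ((n / 2 : ℕ) : ℤ) * (((n - 1) / 2 : ℕ) : ℤ) ≤ C2 u + C2 v := by
  have hpq : ((n / 2 : ℕ) : ℤ) + ((n - 1) / 2 : ℕ) + 1 = n := by omega
  -- `u - v ≡ n` and `⌊n/2⌋ - ⌊(n-1)/2⌋ ≡ n + 1 (mod 2)`, so the two cannot both vanish.
  have hparity : 1 ≤ (u - v) ^ 2 + (((n / 2 : ℕ) : ℤ) - ((n - 1) / 2 : ℕ)) ^ 2 := by
    rcases (by omega : u - v ≠ 0 ∨ ((n / 2 : ℕ) : ℤ) - ((n - 1) / 2 : ℕ) ≠ 0) with h | h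
    · nlinarith [Int.one_le_abs h, sq_abs (u - v)]
    · nlinarith [Int.one_le_abs h, sq_abs (((n / 2 : ℕ) : ℤ) - ((n - 1) / 2 : ℕ))]
  nlinarith [two_mul_C2 u, two_mul_C2 v]

lemma dz_swap {n : ℕ} [NeZero n] (x y : ZMod n) :
    dz y x = if x = y then 0 else n - dz x y := by
  rw [dz, dz, ← neg_sub, ZMod.neg_val]
  simp only [sub_eq_zero, eq_comm]

lemma half_mul_half_pred_add_pred_le_two_mul_dz_add_fz {n : ℕ} [NeZero n] (x x' : ZMod n) :
    ((n / 2 : ℕ) : ℤ) * (((n - 1) / 2 : ℕ) : ℤ) + n - 1 ≤ 2 * (dz x' x : ℤ) + fz x x' := by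
  have hlt : dz x x' < n := ZMod.val_lt _
  rw [fz, dz_swap]
  split_ifs with h
  · have h0 : dz x x' = 0 := by simp [dz, h]
    have hsplit := half_mul_half_pred_le_C2_add_C2 (Nat.pos_of_neZero n)
      (u := 1) (v := (n : ℤ) - 1) (by ring)
    have hstep : C2 n = C2 (n - 1) + (n - 1) := by simpa using C2_add_one ((n : ℤ) - 1)
    have hC2_zero : C2 0 = 0 := rfl
    have hC2_one : C2 1 = 0 := rfl
    simp only [h0, Nat.cast_zero, sub_zero, mul_zero, zero_add]
    linarith
  · have hsplit := half_mul_half_pred_le_C2_add_C2 (Nat.pos_of_neZero n)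
      (u := (dz x x' : ℤ) - 1) (v := (n : ℤ) - dz x x' + 1) (by ring)
    have hstep := C2_add_one ((dz x x' : ℤ) - 1)
    have hstep' := C2_add_one ((n : ℤ) - dz x x')
    rw [sub_add_cancel] at hstep
    rw [Nat.cast_sub hlt.le]
    linarith

theorem stmt_6 (n : ℕ) (hn : 2 ≤ n) (x x' y y' : ZMod n) (Z : ℕ) (hZ : Z = dz y' y)
    (horder : dz x' y' + dz y' y + dz y x ≥ dz x' x + n) :
    ((n / 2 : ℕ) : ℤ) * (((n - 1) / 2 : ℕ) : ℤ) + n - 1 - 2 * Z + 2 * n ≤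
      2 * (dz y x : ℤ) + 2 * (dz x' y' : ℤ) + fz x x' := by
  have : NeZero n := ⟨by omega⟩
  have horder' : (dz x' x : ℤ) + n ≤ dz x' y' + Z + dz y x := by
    subst hZ
    exact_mod_cast horder
  linarith [half_mul_half_pred_add_pred_le_two_mul_dz_add_fz x x']
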